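/- Let μ be the bilinear multiplication of 𝒵₃₅ on ℂ⁵ (e₁e₂ = e₄, e₁e₄ = e₅, e₂e₁ = -e₄, e₂e₂ = e₃, e₂e₃ = e₅, e₃e₂ = 2e₅, other basis products zero) and λ the bilinear multiplication of 𝒵₃₇ on ℂ⁵ (e₁e₂ = e₄, e₂e₁ = -e₄, e₂e₂ = e₃, e₂e₃ = e₅, e₂e₄ = e₅, e₃e₂ = 2e₅, other basis products zero). Then μ degenerates to λ: there exists a family (g_t), t ∈ ℂ \ {0}, of invertible linear endomorphisms of ℂ⁵ such that for all x, y ∈ ℂ⁵ the map t ↦ g_t⁻¹(μ(g_t x, g_t y)) tends to λ(x,y) as t → 0 within ℂ \ {0}. -/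
import Mathlib


open Topology Filter

/-- The standard basis of `ℂ⁵`. -/
def ee (i : Fin 5) : Fin 5 → ℂ := Pi.single i 1

/-- Structure constants (0-indexed) of the algebra `𝒵₃₅`:
`e₁e₂ = e₄`, `e₁e₄ = e₅`, `e₂e₁ = -e₄`, `e₂e₂ = e₃`, `e₂e₃ = e₅`, `e₃e₂ = 2e₅`. -/
def cZ35 (i j : Fin 5) : Fin 5 → ℂ :=
  if i = 0 ∧ j = 1 then ee 3
  else if i = 0 ∧ j = 3 then ee 4
  else if i = 1 ∧ j = 0 then -ee 3
  else if i = 1 ∧ j = 1 then ee 2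
  else if i = 1 ∧ j = 2 then ee 4
  else if i = 2 ∧ j = 1 then (2 : ℂ) • ee 4
  else 0

/-- Structure constants (0-indexed) of the algebra `𝒵₃₇`:
`e₁e₂ = e₄`, `e₂e₁ = -e₄`, `e₂e₂ = e₃`, `e₂e₃ = e₅`, `e₂e₄ = e₅`, `e₃e₂ = 2e₅`. -/
def cZ37 (i j : Fin 5) : Fin 5 → ℂ :=
  if i = 0 ∧ j = 1 then ee 3
  else if i = 1 ∧ j = 0 then -ee 3
  else if i = 1 ∧ j = 1 then ee 2
  else if i = 1 ∧ j = 2 then ee 4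
  else if i = 1 ∧ j = 3 then ee 4
  else if i = 2 ∧ j = 1 then (2 : ℂ) • ee 4
  else 0

/-- The forward linear map of the degeneration family. -/
noncomputable def Amap (t : ℂ) : (Fin 5 → ℂ) →ₗ[ℂ] (Fin 5 → ℂ) where
  toFun x := ![t * x 0 + t⁻¹ * x 1, x 1, x 2, t * x 3, x 4]
  map_add' x y := by
    funext i; fin_cases i <;> simp <;> ring
  map_smul' c x := by
    funext i; fin_cases i <;> simp <;> ring

/-- The inverse linear map of the degeneration family. -/
noncomputable def Bmap (t : ℂ) : (Fin 5 → ℂ) →ₗ[ℂ] (Fin 5 → ℂ) where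
  toFun x := ![t⁻¹ * x 0 - t⁻¹ * t⁻¹ * x 1, x 1, x 2, t⁻¹ * x 3, x 4]
  map_add' x y := by
    funext i; fin_cases i <;> simp <;> ring
  map_smul' c x := by
    funext i; fin_cases i <;> simp <;> ring

lemma AB (t : ℂ) (ht : t ≠ 0) : (Amap t).comp (Bmap t) = LinearMap.id := by
  apply LinearMap.ext; intro x
  funext i
  fin_cases i <;> simp [Amap, Bmap] <;> field_simp <;> ring

lemma BA (t : ℂ) (ht : t ≠ 0) : (Bmap t).comp (Amap t) = LinearMap.id := by
  apply LinearMap.ext; intro x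
  funext i
  fin_cases i <;> simp [Amap, Bmap] <;> field_simp <;> ring

/-- The degeneration family as linear equivalences. -/
noncomputable def gfam (t : ℂ) : (Fin 5 → ℂ) ≃ₗ[ℂ] (Fin 5 → ℂ) :=
  if h : t = 0 then LinearEquiv.refl ℂ _
  else LinearEquiv.ofLinear (Amap t) (Bmap t) (AB t h) (BA t h)

lemma basis_expand (x : Fin 5 → ℂ) : x = ∑ i, x i • ee i := by
  funext j
  simp [ee, Finset.sum_apply, Pi.single_apply, Finset.sum_ite_eq', mul_comm]

lemma bil_expand (c : Fin 5 → Fin 5 → Fin 5 → ℂ)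
    (μ : (Fin 5 → ℂ) →ₗ[ℂ] (Fin 5 → ℂ) →ₗ[ℂ] (Fin 5 → ℂ))
    (hc : ∀ i j, μ (ee i) (ee j) = c i j) (x y : Fin 5 → ℂ) :
    μ x y = ∑ i, ∑ j, (x i * y j) • c i j := by
  conv_lhs => rw [basis_expand x, basis_expand y]
  simp [map_sum, LinearMap.sum_apply, map_smul, LinearMap.smul_apply, Finset.smul_sum,
    smul_smul, hc]
  rw [Finset.sum_comm]
  exact Finset.sum_congr rfl fun i _ => Finset.sum_congr rfl fun j _ => by rw [mul_comm]

lemma mu_formula (μ : (Fin 5 → ℂ) →ₗ[ℂ] (Fin 5 → ℂ) →ₗ[ℂ] (Fin 5 → ℂ))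
    (hμ : ∀ i j, μ (ee i) (ee j) = cZ35 i j) (u v : Fin 5 → ℂ) :
    μ u v = ![0, 0, u 1 * v 1, u 0 * v 1 - u 1 * v 0,
      u 0 * v 3 + u 1 * v 2 + 2 * u 2 * v 1] := by
  rw [bil_expand cZ35 μ hμ]
  funext i
  fin_cases i <;>
  · simp [Fin.sum_univ_five, cZ35, ee, Pi.single_apply, Finset.sum_apply]
    try ring

lemma lam_formula (lam : (Fin 5 → ℂ) →ₗ[ℂ] (Fin 5 → ℂ) →ₗ[ℂ] (Fin 5 → ℂ))
    (hlam : ∀ i j, lam (ee i) (ee j) = cZ37 i j) (u v : Fin 5 → ℂ) :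
    lam u v = ![0, 0, u 1 * v 1, u 0 * v 1 - u 1 * v 0,
      u 1 * v 2 + u 1 * v 3 + 2 * u 2 * v 1] := by
  rw [bil_expand cZ37 lam hlam]
  funext i
  fin_cases i <;>
  · simp [Fin.sum_univ_five, cZ37, ee, Pi.single_apply, Finset.sum_apply]
    try ring

lemma key (μ lam : (Fin 5 → ℂ) →ₗ[ℂ] (Fin 5 → ℂ) →ₗ[ℂ] (Fin 5 → ℂ))
    (hμ : ∀ i j, μ (ee i) (ee j) = cZ35 i j)
    (hlam : ∀ i j, lam (ee i) (ee j) = cZ37 i j)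
    (x y : Fin 5 → ℂ) (t : ℂ) (ht : t ≠ 0) :
    (gfam t).symm (μ (gfam t x) (gfam t y))
      = lam x y + (t ^ 2 * (x 0 * y 3)) • ee 4 := by
  rw [gfam, dif_neg ht]
  rw [show (LinearEquiv.ofLinear (Amap t) (Bmap t) (AB t ht) (BA t ht)) x = Amap t x from rfl,
    show (LinearEquiv.ofLinear (Amap t) (Bmap t) (AB t ht) (BA t ht)) y = Amap t y from rfl]
  rw [mu_formula μ hμ, lam_formula lam hlam]
  rw [show ∀ w, (LinearEquiv.ofLinear (Amap t) (Bmap t) (AB t ht) (BA t ht)).symm w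
      = Bmap t w from fun w => rfl]
  funext i
  fin_cases i <;>
  · simp [Amap, Bmap, ee, Pi.single_apply]
    try field_simp
    try ring

/-- `𝒵₃₅` degenerates to `𝒵₃₇`. -/
theorem Z35_degenerates_to_Z37
    (μ lam : (Fin 5 → ℂ) →ₗ[ℂ] (Fin 5 → ℂ) →ₗ[ℂ] (Fin 5 → ℂ))
    (hμ : ∀ i j, μ (ee i) (ee j) = cZ35 i j)
    (hlam : ∀ i j, lam (ee i) (ee j) = cZ37 i j) :
    ∃ g : ℂ → ((Fin 5 → ℂ) ≃ₗ[ℂ] (Fin 5 → ℂ)),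
      ∀ x y : Fin 5 → ℂ,
        Tendsto (fun t : ℂ => (g t).symm (μ (g t x) (g t y)))
          (𝓝[≠] (0 : ℂ)) (𝓝 (lam x y)) := by
  refine ⟨gfam, fun x y => ?_⟩
  have h1 : Tendsto (fun t : ℂ => lam x y + (t ^ 2 * (x 0 * y 3)) • ee 4)
      (𝓝[≠] (0 : ℂ)) (𝓝 (lam x y)) := by
    have : Tendsto (fun t : ℂ => lam x y + (t ^ 2 * (x 0 * y 3)) • ee 4)
        (𝓝 (0 : ℂ)) (𝓝 (lam x y + ((0 : ℂ) ^ 2 * (x 0 * y 3)) • ee 4)) := by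
      apply Tendsto.const_add
      apply Tendsto.smul_const
      exact (continuous_pow 2).tendsto 0 |>.mul_const _
    simpa using this.mono_left nhdsWithin_le_nhds
  refine Tendsto.congr' ?_ h1
  filter_upwards [self_mem_nhdsWithin] with t ht
  exact (key μ lam hμ hlam x y t ht).symm
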